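/- arXiv:1309.3341 — 7 statements merged into one kernel-verified Lean document; each statement's English description precedes it below -/
import Mathlib

section
/- Let G be a group and let g₁, …, g_k ∈ G be torsion elements of finite orders d₁, …, d_k respectively, where the dᵢ are pairwise distinct integers greater than 1. Then the family consisting of the identity 1 of ℂ[G] together with the idempotents p_{g₁}, …, p_{g_k} is linearly independent over ℂ in the complex group algebra ℂ[G]. -/
/-- The idempotent associated to an element `g` of finite order `d`:
`p_g = (1/d) · ∑_{t=0}^{d-1} g^t ∈ ℂ[G]`. -/
noncomputable def pIdem {G : Type*} [Group G] (g : G) (d : ℕ) : MonoidAlgebra ℂ G :=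
  (d : ℂ)⁻¹ • ∑ t ∈ Finset.range d, MonoidAlgebra.of ℂ G (g ^ t)

/-! The coefficient of `p_g` at `h` is `1 / ord g` if `h ∈ ⟨g⟩` and `0` otherwise, and `h ∈ ⟨g⟩`
forces `ord h ∣ ord g`. Hence evaluating at the `g_i` makes any family of `p_g` with pairwise
distinct orders triangular with respect to the order, and `1 = p_1` joins such a family as the
element of order `1`. -/

open Function

theorem linearIndependent_of_triangular {ι R M α : Type*} [Ring R] [NoZeroDivisors R]
    [AddCommGroup M] [Module R M] [LinearOrder α] {v : ι → M} (f : ι → M →ₗ[R] R) (b : ι → α)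
    (hdiag : ∀ i, f i (v i) ≠ 0) (htri : ∀ i j, f i (v j) ≠ 0 → j = i ∨ b i < b j) :
    LinearIndependent R v := by
  classical
  rw [linearIndependent_iff']
  intro s c hsum
  by_contra! hne
  obtain ⟨i, hi, hmax⟩ := (s.filter (c · ≠ 0)).exists_max_image b
    (by simpa [Finset.filter_nonempty_iff] using hne)
  rw [Finset.mem_filter] at hi
  have hfi : ∑ j ∈ s, c j * f i (v j) = c i * f i (v i) := by
    refine Finset.sum_eq_single_of_mem i hi.1 fun j hj hji => ?_
    by_contra h
    obtain ⟨hcj, hfj⟩ := mul_ne_zero_iff.1 h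
    exact ((htri i j hfj).resolve_left hji).not_ge (hmax j (Finset.mem_filter.2 ⟨hj, hcj⟩))
  have := congrArg (f i) hsum
  rw [map_sum, map_zero] at this
  simp only [map_smul, smul_eq_mul, hfi] at this
  exact mul_ne_zero hi.2 (hdiag i) this

open Classical in
theorem coeff_pIdem_orderOf {G : Type*} [Group G] {g : G} (hg : IsOfFinOrder g) (a : G) :
    (pIdem g (orderOf g)).coeff a =
      if a ∈ Submonoid.powers g then (orderOf g : ℂ)⁻¹ else 0 := by
  have hsum : ∑ t ∈ Finset.range (orderOf g), (MonoidAlgebra.of ℂ G (g ^ t)).coeff =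
      ∑ x ∈ (Finset.range (orderOf g)).image (g ^ ·), Finsupp.single x 1 := by
    rw [Finset.sum_image fun s hs t ht =>
      pow_injOn_Iio_orderOf (Finset.mem_range.1 hs) (Finset.mem_range.1 ht)]
    rfl
  rw [pIdem, MonoidAlgebra.coeff_smul_apply, MonoidAlgebra.coeff_sum, hsum,
    Finsupp.finsetSum_apply]
  simp [hg.mem_powers_iff_mem_range_orderOf, Finsupp.single_apply]

theorem pIdem_one {G : Type*} [Group G] : pIdem (1 : G) 1 = 1 := by
  simp [pIdem, MonoidAlgebra.one_def]

theorem linearIndependent_pIdem_orderOf {ι G : Type*} [Group G] {g : ι → G}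
    (hg : ∀ i, IsOfFinOrder (g i)) (hinj : Injective fun i => orderOf (g i)) :
    LinearIndependent ℂ fun i => pIdem (g i) (orderOf (g i)) := by
  classical
  refine linearIndependent_of_triangular
    (fun i => Finsupp.lapply (g i) ∘ₗ (MonoidAlgebra.coeffLinearEquiv ℂ).toLinearMap)
    (fun i => orderOf (g i)) (fun i => ?_) (fun i j hij => ?_)
  · simpa [coeff_pIdem_orderOf (hg i), Submonoid.mem_powers] using (hg i).orderOf_pos.ne'
  · simp only [LinearMap.coe_comp, comp_apply, LinearEquiv.coe_coe,
      MonoidAlgebra.coeffLinearEquiv_apply, Finsupp.lapply_apply,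
      coeff_pIdem_orderOf (hg j)] at hij
    obtain ⟨n, hn⟩ : g i ∈ Submonoid.powers (g j) := by by_contra h; simp [h] at hij
    have hdvd : orderOf (g i) ∣ orderOf (g j) := hn ▸ orderOf_pow_dvd n
    rcases (Nat.le_of_dvd (hg j).orderOf_pos hdvd).eq_or_lt with heq | hlt
    · exact .inl (hinj heq.symm)
    · exact .inr hlt

/-- Let `g₁, …, g_k` be torsion elements of pairwise distinct finite orders
`d₁, …, d_k > 1`.  Then the family `1, p_{g₁}, …, p_{g_k}` is linearly independent
over `ℂ` in the complex group algebra `ℂ[G]`. -/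
theorem linearIndependent_one_pIdem {G : Type*} [Group G] (k : ℕ)
    (g : Fin k → G) (d : Fin k → ℕ)
    (hd : ∀ i, 1 < d i) (hinj : Function.Injective d)
    (horder : ∀ i, orderOf (g i) = d i) :
    LinearIndependent ℂ
      (Fin.cons (1 : MonoidAlgebra ℂ G) (fun i => pIdem (g i) (d i)) :
        Fin (k + 1) → MonoidAlgebra ℂ G) := by
  set g' : Fin (k + 1) → G := Fin.cons 1 g
  have horder' : (fun i => orderOf (g' i)) = Fin.cons 1 d := by
    funext i
    refine Fin.cases ?_ (fun i => ?_) i <;> simp [g', horder]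
  have hfamily : (Fin.cons 1 (fun i => pIdem (g i) (d i)) : Fin (k + 1) → MonoidAlgebra ℂ G) =
      fun i => pIdem (g' i) (orderOf (g' i)) := by
    funext i
    refine Fin.cases ?_ (fun i => ?_) i <;> simp [g', horder, pIdem_one]
  rw [hfamily]
  refine linearIndependent_pIdem_orderOf (fun i => orderOf_pos_iff.1 ?_) ?_
  · rw [congrFun horder' i]
    refine Fin.cases one_pos (fun i => ?_) i
    simpa using (hd i).trans' one_pos
  · rw [horder', Fin.cons_injective_iff]
    exact ⟨fun ⟨i, hi⟩ => (hd i).ne' hi, hinj⟩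
end

section
/- Let G be a group, g ∈ G of finite order d > 0, p_g the associated idempotent, and C(g) the conjugacy class of g. Then τ_{C(g)}(p_g) is a real number and τ_{C(g)}(p_g) ≥ 1/d; in fact τ_{C(g)}(p_g) = m/d where m is the number of exponents t with 0 ≤ t < d such that g^t is conjugate to g, and m ≥ 1. -/
open scoped Classical

/-- The conjugacy-class functional `τ_C(f) = ∑_{g ∈ C} f(g)` on `ℂ[G]`. -/
noncomputable def tauC {G : Type*} [Group G] (C : Set G) (f : MonoidAlgebra ℂ G) : ℂ :=
  ∑ g ∈ f.coeff.support, C.indicator (fun x => f.coeff x) g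

/-! `τ_C` is linear and sends each group element to the indicator of `C`, so `τ_C(p_g)` is the
number of `t < d` with `g^t ∈ C`, divided by `d`; no injectivity of `t ↦ g^t` is needed. Since
`g^d = 1`, the exponent `t = 1 % d` has `g^t = g`, so the count is positive for `C = C(g)`. -/

section

variable {G : Type*} [Group G]

lemma tauC_eq_linearCombination (C : Set G) (f : MonoidAlgebra ℂ G) :
    tauC C f = Finsupp.linearCombination ℂ (C.indicator 1) f.coeff := by
  rw [tauC, Finsupp.linearCombination_apply, Finsupp.sum]
  refine Finset.sum_congr rfl fun x _ => ?_
  by_cases hx : x ∈ C <;> simp [hx]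

lemma tauC_pIdem (C : Set G) (g : G) (d : ℕ) :
    tauC C (pIdem g d) = ((Finset.range d).filter fun t => g ^ t ∈ C).card / d := by
  simp [tauC_eq_linearCombination, pIdem, Set.indicator_apply, Finset.sum_boole, div_eq_inv_mul]

lemma one_le_card_filter_isConj_pow {g : G} {d : ℕ} (hd : 0 < d) (hg : g ^ d = 1) :
    1 ≤ ((Finset.range d).filter fun t => IsConj g (g ^ t)).card := by
  have hpow : g ^ (1 % d) = g :=
    calc g ^ (1 % d) = g ^ (1 % d) * (g ^ d) ^ (1 / d) := by rw [hg, one_pow, mul_one]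
      _ = g := by rw [← pow_mul, ← pow_add, Nat.mod_add_div, pow_one]
  exact Finset.card_pos.mpr ⟨1 % d, Finset.mem_filter.mpr
    ⟨Finset.mem_range.mpr (Nat.mod_lt _ hd), by rw [hpow]⟩⟩

end

/-- For `g` of finite order `d > 0`, `τ_{C(g)}(p_g) = m/d`, where
`m = #{t | 0 ≤ t < d, g^t conjugate to g}`; moreover `m ≥ 1`, so
`τ_{C(g)}(p_g)` is the real number `m/d ≥ 1/d`. -/
theorem tauC_pIdem_eq {G : Type*} [Group G] (g : G) (d : ℕ) (hd : 0 < d)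
    (hg : orderOf g = d) :
    tauC {h : G | IsConj g h} (pIdem g d)
      = ((((Finset.range d).filter fun t => IsConj g (g ^ t)).card : ℂ) / d) ∧
    1 ≤ (((Finset.range d).filter fun t => IsConj g (g ^ t)).card) ∧
    (1 : ℝ) / d ≤ ((((Finset.range d).filter fun t => IsConj g (g ^ t)).card : ℝ) / d) := by
  have hm := one_le_card_filter_isConj_pow hd (hg ▸ pow_orderOf_eq_one g)
  refine ⟨tauC_pIdem _ g d, hm, ?_⟩
  gcongr
  exact_mod_cast hm
end

section
/- Let G be a group with a length function l, and let C ⊆ G be a conjugacy class of polynomial growth with respect to l. Then there exist a real number s ≥ 0 and a constant K > 0 such that for every f ∈ ℂ[G], |∑_{g ∈ C} f(g)| ≤ K · (∑_{g ∈ G} |f(g)|² (1 + l(g))^{2s})^{1/2}. In other words, the conjugacy-class functional τ_C extends to a bounded linear functional on the Sobolev completion H^s(G) for sufficiently large s. -/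
/-!
By Cauchy–Schwarz with the weight `w g = (1 + l g)^(2s)`,
`|τ_C(f)| ≤ ∑_{g ∈ C} |f g| ≤ ‖f‖_{H^s} · (∑_{g ∈ C} w g⁻¹)^{1/2}`, so it suffices that
`w⁻¹` be summable over `C`. Grouping `C` by length, that sum is `∑_n |C ∩ l⁻¹(n)| (1 + n)^(-2s)`,
and with polynomial growth of degree `m` the choice `2s = m + 2` bounds it by `K ∑_n (1 + n)^(-2)`.
-/

structure IsLengthFunction {G : Type*} [Group G] (l : G → ℕ) : Prop where
  map_one : l 1 = 0
  map_inv : ∀ g : G, l g⁻¹ = l g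
  map_mul : ∀ g h : G, l (g * h) ≤ l g + l h
  finite_spheres : ∀ n : ℕ, {g : G | l g = n}.Finite

/-- The Sobolev `H^s` norm `‖f‖_{H^s} = (∑_g |f(g)|² (1 + l(g))^{2s})^{1/2}` on `ℂ[G]`. -/
noncomputable def hsNorm {G : Type*} [Group G] (l : G → ℕ) (s : ℝ)
    (f : MonoidAlgebra ℂ G) : ℝ :=
  Real.sqrt (∑ g ∈ f.coeff.support, ‖f.coeff g‖ ^ 2 * (1 + (l g : ℝ)) ^ (2 * s))

open Finset

lemma Finset.sum_sq_le_sum_sq_mul_mul_sum_inv {ι : Type*} (s : Finset ι) (a w : ι → ℝ)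
    (hw : ∀ i ∈ s, 0 < w i) :
    (∑ i ∈ s, a i) ^ 2 ≤ (∑ i ∈ s, a i ^ 2 * w i) * ∑ i ∈ s, (w i)⁻¹ :=
  sum_sq_le_sum_mul_sum_of_sq_le_mul s
    (fun i hi => mul_nonneg (sq_nonneg _) (hw i hi).le) (fun i hi => (inv_pos.2 (hw i hi)).le)
    (fun i hi => by rw [mul_assoc, mul_inv_cancel₀ (hw i hi).ne', mul_one])

lemma Finset.sum_comp_le_tsum_of_card_fiber_le {α : Type*} (T : Finset α) (l : α → ℕ)
    {φ c : ℕ → ℝ} (hφ : ∀ n, 0 ≤ φ n) (hc : ∀ n, (#{g ∈ T | l g = n} : ℝ) ≤ c n)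
    (hsum : Summable fun n => c n * φ n) :
    ∑ g ∈ T, φ (l g) ≤ ∑' n, c n * φ n := by
  have hcφ : ∀ n, 0 ≤ c n * φ n := fun n => mul_nonneg ((Nat.cast_nonneg _).trans (hc n)) (hφ n)
  calc ∑ g ∈ T, φ (l g) = ∑ n ∈ T.image l, #{g ∈ T | l g = n} • φ n := sum_comp φ l
    _ ≤ ∑ n ∈ T.image l, c n * φ n :=
        sum_le_sum fun n _ => by rw [nsmul_eq_mul]; exact mul_le_mul_of_nonneg_right (hc n) (hφ n)
    _ ≤ ∑' n, c n * φ n := hsum.sum_le_tsum _ fun n _ => hcφ n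

lemma Finset.card_filter_le_ncard {α : Type*} {T : Finset α} {S : Set α} (hTS : ↑T ⊆ S)
    (p : α → Prop) [DecidablePred p] (hS : {x ∈ S | p x}.Finite) :
    #{x ∈ T | p x} ≤ {x ∈ S | p x}.ncard := by
  rw [← Set.ncard_coe_finset]
  exact Set.ncard_le_ncard (fun x hx => by
    simp only [coe_filter, Set.mem_ofPred_eq] at hx; exact ⟨hTS hx.1, hx.2⟩) hS

lemma summable_mul_pow_mul_inv_one_add_pow (K : ℝ) (m : ℕ) :
    Summable fun n : ℕ => K * (1 + (n : ℝ)) ^ m * ((1 + (n : ℝ)) ^ (m + 2))⁻¹ := by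
  have h : Summable fun n : ℕ => ((1 + (n : ℝ)) ^ 2)⁻¹ := by
    simpa [add_comm] using
      (summable_nat_add_iff 1).2 (Real.summable_nat_pow_inv.2 one_lt_two)
  refine (h.mul_left K).congr fun n => ?_
  have : (1 + (n : ℝ)) ^ m ≠ 0 := by positivity
  rw [pow_add, mul_inv, ← mul_assoc, mul_assoc K, mul_inv_cancel₀ this, mul_one]

lemma sum_inv_one_add_pow_le_tsum_of_polyGrowth {α : Type*} (l : α → ℕ) (C : Set α) (K m : ℕ)
    (hfin : ∀ n : ℕ, ({g ∈ C | l g = n} : Set α).Finite)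
    (hgrowth : ∀ n : ℕ, ({g ∈ C | l g = n} : Set α).ncard ≤ K * (1 + n) ^ m)
    {T : Finset α} (hTC : ↑T ⊆ C) :
    ∑ g ∈ T, ((1 + (l g : ℝ)) ^ (m + 2))⁻¹ ≤
      ∑' n : ℕ, (K : ℝ) * (1 + (n : ℝ)) ^ m * ((1 + (n : ℝ)) ^ (m + 2))⁻¹ :=
  T.sum_comp_le_tsum_of_card_fiber_le l (fun n => by positivity)
    (fun n => by exact_mod_cast (card_filter_le_ncard hTC (l · = n) (hfin n)).trans (hgrowth n))
    (summable_mul_pow_mul_inv_one_add_pow K m)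

section tauC

variable {G : Type*} [Group G]

open Classical in
lemma norm_tauC_le_sum_norm (C : Set G) (f : MonoidAlgebra ℂ G) :
    ‖tauC C f‖ ≤ ∑ g ∈ f.coeff.support with g ∈ C, ‖f.coeff g‖ := by
  rw [sum_filter]
  refine (norm_sum_le _ _).trans (sum_le_sum fun g _ => ?_)
  by_cases hg : g ∈ C <;> simp [hg]

lemma norm_tauC_le_mul_hsNorm (l : G → ℕ) (C : Set G) (s B : ℝ)
    (hB : ∀ T : Finset G, ↑T ⊆ C → ∑ g ∈ T, ((1 + (l g : ℝ)) ^ (2 * s))⁻¹ ≤ B)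
    (f : MonoidAlgebra ℂ G) : ‖tauC C f‖ ≤ Real.sqrt B * hsNorm l s f := by
  classical
  set T := {g ∈ f.coeff.support | g ∈ C}
  set w : G → ℝ := fun g => (1 + (l g : ℝ)) ^ (2 * s)
  have hw : ∀ g ∈ T, 0 < w g := fun g _ => by positivity
  have hT : ∑ g ∈ T, ‖f.coeff g‖ ^ 2 * w g ≤ ∑ g ∈ f.coeff.support, ‖f.coeff g‖ ^ 2 * w g :=
    sum_le_sum_of_subset_of_nonneg (filter_subset _ _) fun g _ _ => by positivity
  calc ‖tauC C f‖ ≤ ∑ g ∈ T, ‖f.coeff g‖ := norm_tauC_le_sum_norm C f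
    _ ≤ Real.sqrt ((∑ g ∈ T, ‖f.coeff g‖ ^ 2 * w g) * ∑ g ∈ T, (w g)⁻¹) :=
        Real.le_sqrt_of_sq_le (T.sum_sq_le_sum_sq_mul_mul_sum_inv _ w hw)
    _ ≤ Real.sqrt ((∑ g ∈ f.coeff.support, ‖f.coeff g‖ ^ 2 * w g) * B) := by
        gcongr
        exact hB T fun g hg => (mem_filter.1 hg).2
    _ = Real.sqrt B * hsNorm l s f := by
        rw [Real.sqrt_mul (sum_nonneg fun g _ => by positivity), hsNorm, mul_comm]

end tauC

theorem tauC_bounded_of_polyGrowth_general {G : Type*} [Group G] (l : G → ℕ)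
    (hl : IsLengthFunction l) (C : Set G)
    (hpoly : ∃ K m : ℕ, ∀ n : ℕ, ({g ∈ C | l g = n} : Set G).ncard ≤ K * (1 + n) ^ m) :
    ∃ s : ℝ, 0 ≤ s ∧ ∃ K : ℝ, 0 < K ∧
      ∀ f : MonoidAlgebra ℂ G, ‖tauC C f‖ ≤ K * hsNorm l s f := by
  obtain ⟨K, m, hKm⟩ := hpoly
  set B := ∑' n : ℕ, (K : ℝ) * (1 + (n : ℝ)) ^ m * ((1 + (n : ℝ)) ^ (m + 2))⁻¹
  have hB : 0 ≤ B := tsum_nonneg fun n => by positivity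
  have hfin : ∀ n : ℕ, ({g ∈ C | l g = n} : Set G).Finite :=
    fun n => (hl.finite_spheres n).subset fun _ hg => hg.2
  have hweight : ∀ x : ℝ, (1 + x) ^ (2 * (((m : ℝ) + 2) / 2)) = (1 + x) ^ (m + 2) := fun x => by
    rw [← Real.rpow_natCast]; push_cast; ring_nf
  -- `B + 1` rather than `B`, which vanishes when `K = 0`.
  refine ⟨((m : ℝ) + 2) / 2, by positivity, Real.sqrt (B + 1), by positivity,
    norm_tauC_le_mul_hsNorm l C _ _ fun T hTC => ?_⟩
  simp only [hweight]
  exact (sum_inv_one_add_pow_le_tsum_of_polyGrowth l C K m hfin hKm hTC).trans (by linarith)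

/-- If a conjugacy class `C` has polynomial growth with respect to a length function `l`,
then the conjugacy-class functional `τ_C` is bounded with respect to the Sobolev `H^s`
norm for some `s ≥ 0`. -/
theorem tauC_bounded_of_polyGrowth {G : Type*} [Group G] (l : G → ℕ)
    (hl : IsLengthFunction l) (g₀ : G) (C : Set G) (hC : C = {h : G | IsConj g₀ h})
    (hpoly : ∃ K m : ℕ, ∀ n : ℕ, ({g ∈ C | l g = n} : Set G).ncard ≤ K * (1 + n) ^ m) :
    ∃ s : ℝ, 0 ≤ s ∧ ∃ K : ℝ, 0 < K ∧
      ∀ f : MonoidAlgebra ℂ G, ‖tauC C f‖ ≤ K * hsNorm l s f :=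
  tauC_bounded_of_polyGrowth_general l hl C hpoly
end

section
/- Let G be a group with a length function l, and let C ⊆ G be a conjugacy class of superpolynomial growth with respect to l. Then for every real number s ≥ 0 the conjugacy-class functional τ_C is unbounded with respect to the H^s norm: for every constant K > 0 there exists f ∈ ℂ[G] with |∑_{g ∈ C} f(g)| > K · (∑_{g ∈ G} |f(g)|² (1 + l(g))^{2s})^{1/2}. -/
/-- A subset `C ⊆ G` has superpolynomial growth with respect to `l` if for all
constants `K`, `m` there are infinitely many `n` with `|{g ∈ C | l g = n}| > K(1+n)^m`. -/
def SuperPolyGrowth {G : Type*} [Group G] (l : G → ℕ) (C : Set G) : Prop :=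
  ∀ K m : ℕ, {n : ℕ | K * (1 + n) ^ m < ({g ∈ C | l g = n} : Set G).ncard}.Infinite

/-! For `f` the indicator of the finite set `F = C ∩ {g | l g = n}` one has `τ_C(f) = |F|` and
`‖f‖_{H^s} = √|F| (1 + n)^s`, so `|τ_C(f)| / ‖f‖_{H^s} = √|F| / (1 + n)^s`, which superpolynomial
growth makes arbitrarily large. -/

noncomputable def finsetIndicator {G : Type*} (F : Finset G) : MonoidAlgebra ℂ G :=
  MonoidAlgebra.ofCoeff (Finsupp.indicator F fun _ _ => 1)

section FinsetIndicator

variable {G : Type*} (F : Finset G)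

theorem coeff_finsetIndicator_of_mem {g : G} (hg : g ∈ F) : (finsetIndicator F).coeff g = 1 :=
  Finsupp.indicator_of_mem hg fun _ _ => (1 : ℂ)

theorem support_coeff_finsetIndicator : (finsetIndicator F).coeff.support = F := by
  ext g
  by_cases hg : g ∈ F
  · simp [coeff_finsetIndicator_of_mem F hg, hg]
  · simp [finsetIndicator, Finsupp.indicator_of_notMem hg, hg]

theorem tauC_finsetIndicator [Group G] {C : Set G} (hF : ↑F ⊆ C) :
    tauC C (finsetIndicator F) = F.card := by
  rw [tauC, support_coeff_finsetIndicator, Finset.card_eq_sum_ones, Nat.cast_sum]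
  refine Finset.sum_congr rfl fun g hg => ?_
  rw [Set.indicator_of_mem (hF hg), coeff_finsetIndicator_of_mem F hg, Nat.cast_one]

theorem hsNorm_finsetIndicator [Group G] {l : G → ℕ} {n : ℕ} (hF : ∀ g ∈ F, l g = n) (s : ℝ) :
    hsNorm l s (finsetIndicator F) = √(F.card * (1 + (n : ℝ)) ^ (2 * s)) := by
  rw [hsNorm, support_coeff_finsetIndicator, ← nsmul_eq_mul, ← Finset.sum_const]
  congr 1
  refine Finset.sum_congr rfl fun g hg => ?_
  rw [coeff_finsetIndicator_of_mem F hg, hF g hg, norm_one, one_pow, one_mul]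

end FinsetIndicator

theorem SuperPolyGrowth.exists_lt_ncard {G : Type*} [Group G] {l : G → ℕ} {C : Set G}
    (hC : SuperPolyGrowth l C) (K s : ℝ) :
    ∃ n : ℕ, K * (1 + (n : ℝ)) ^ s < ({g ∈ C | l g = n} : Set G).ncard := by
  obtain ⟨n, hn⟩ := (hC ⌈K⌉₊ ⌈s⌉₊).nonempty
  refine ⟨n, ?_⟩
  have hbase : (1 : ℝ) ≤ 1 + n := le_add_of_nonneg_right n.cast_nonneg
  calc K * (1 + (n : ℝ)) ^ s
      ≤ ⌈K⌉₊ * (1 + (n : ℝ)) ^ (⌈s⌉₊ : ℝ) :=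
        mul_le_mul (Nat.le_ceil K) (Real.rpow_le_rpow_of_exponent_le hbase (Nat.le_ceil s))
          (by positivity) (by positivity)
    _ < _ := by
        rw [Real.rpow_natCast]
        exact_mod_cast hn

theorem mul_sqrt_mul_lt {K b N : ℝ} (hK : 0 ≤ K) (hb : 0 ≤ b) (h : K ^ 2 * b < N) :
    K * √(N * b) < N := by
  have hN : 0 < N := lt_of_le_of_lt (by positivity) h
  calc K * √(N * b) = √(K ^ 2 * (N * b)) := by rw [Real.sqrt_mul (sq_nonneg K), Real.sqrt_sq hK]
    _ < √(N * N) := by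
        rw [mul_left_comm]
        exact Real.sqrt_lt_sqrt (by positivity) (mul_lt_mul_of_pos_left h hN)
    _ = N := Real.sqrt_mul_self hN.le

theorem tauC_unbounded_of_superPolyGrowth_general {G : Type*} [Group G] (l : G → ℕ)
    (C : Set G)
    (hsuper : SuperPolyGrowth l C) :
    ∀ s : ℝ, 0 ≤ s → ∀ K : ℝ, 0 < K →
      ∃ f : MonoidAlgebra ℂ G, K * hsNorm l s f < ‖tauC C f‖ := by
  intro s _ K hK
  obtain ⟨n, hn⟩ := hsuper.exists_lt_ncard (K ^ 2) (2 * s)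
  have hfin : ({g ∈ C | l g = n} : Set G).Finite :=
    Set.finite_of_ncard_pos (Nat.cast_pos.mp (lt_of_le_of_lt (by positivity) hn))
  rw [Set.ncard_eq_toFinset_card _ hfin] at hn
  refine ⟨finsetIndicator hfin.toFinset, ?_⟩
  rw [tauC_finsetIndicator _ fun g hg => (hfin.mem_toFinset.mp hg).1,
    hsNorm_finsetIndicator _ fun g hg => (hfin.mem_toFinset.mp hg).2, Complex.norm_natCast]
  exact mul_sqrt_mul_lt hK.le (by positivity) hn

/-- If a conjugacy class `C` has superpolynomial growth with respect to a length
function `l`, then for every `s ≥ 0` the functional `τ_C` is unbounded with respect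
to the `H^s` norm. -/
theorem tauC_unbounded_of_superPolyGrowth {G : Type*} [Group G] (l : G → ℕ)
    (hl : IsLengthFunction l) (g₀ : G) (C : Set G) (hC : C = {h : G | IsConj g₀ h})
    (hsuper : SuperPolyGrowth l C) :
    ∀ s : ℝ, 0 ≤ s → ∀ K : ℝ, 0 < K →
      ∃ f : MonoidAlgebra ℂ G, K * hsNorm l s f < ‖tauC C f‖ :=
  tauC_unbounded_of_superPolyGrowth_general l C hsuper
end

section
/- Let G be a group with a length function l, let h ∈ G, and suppose the conjugacy class C(h) of h has superpolynomial growth with respect to l. Let τ : ℂ[G] → ℂ be a trace which is bounded with respect to the H^s norm for some s ≥ 0, i.e., there is a constant K with |τ(f)| ≤ K‖f‖_{H^s} for all f ∈ ℂ[G]. Then τ(h) = 0, where h is viewed as a basis element of ℂ[G]. -/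
/-!
Since `τ` is a trace, it takes the constant value `c = τ(h)` on the conjugacy class of `h`.
If `S` is the set of elements of length `n` in that class and `f` its indicator, then
`τ(f) = #S · c` while `‖f‖_{H^s} = √#S · (1 + n)^s`, so boundedness of `τ` forces
`#S ≤ (K / ‖c‖)² (1 + n)^{2s}` for every `n`. If `c ≠ 0` this polynomial bound contradicts the
superpolynomial growth of the class.
-/

open MonoidAlgebra

theorem SuperPolyGrowth.not_forall_ncard_le {G : Type*} [Group G] {l : G → ℕ} {C : Set G}
    (hC : SuperPolyGrowth l C) (A p : ℝ) :
    ¬ ∀ n : ℕ, (({g ∈ C | l g = n} : Set G).ncard : ℝ) ≤ A * (1 + n) ^ p := by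
  intro hle
  obtain ⟨n, hn⟩ := (hC ⌈A⌉₊ ⌈p⌉₊).nonempty
  have hn : (⌈A⌉₊ * (1 + n) ^ ⌈p⌉₊ : ℝ) < ({g ∈ C | l g = n} : Set G).ncard := by
    exact_mod_cast hn
  have hpow : (1 + n : ℝ) ^ p ≤ (1 + n : ℝ) ^ ⌈p⌉₊ := by
    rw [← Real.rpow_natCast]
    exact Real.rpow_le_rpow_of_exponent_le (by simp) (Nat.le_ceil p)
  have hn' := (hle n).trans (mul_le_mul (Nat.le_ceil A) hpow (by positivity) (by positivity))
  linarith

theorem trace_single_eq_of_isConj {k G M : Type*} [CommSemiring k] [Group G] [AddCommMonoid M]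
    [Module k M] (τ : MonoidAlgebra k G →ₗ[k] M) (hτ : ∀ a b, τ (a * b) = τ (b * a))
    {x y : G} (hxy : IsConj x y) (r : k) : τ (single y r) = τ (single x r) := by
  obtain ⟨g, rfl⟩ := isConj_iff.mp hxy
  rw [← mul_one r, ← single_mul_single, hτ, single_mul_single, mul_one, inv_mul_cancel_left,
    one_mul]

theorem hsNorm_sum_single_one {G : Type*} [Group G] (l : G → ℕ) (s : ℝ) (S : Finset G) :
    hsNorm l s (∑ x ∈ S, single x 1) = √(∑ x ∈ S, (1 + (l x : ℝ)) ^ (2 * s)) := by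
  classical
  have hcoeff : ∀ g, (∑ x ∈ S, single x (1 : ℂ)).coeff g = if g ∈ S then 1 else 0 := by
    intro g
    simp [coeff_sum, Finsupp.finsetSum_apply, Finsupp.single_apply]
  have hsupport : (∑ x ∈ S, single x (1 : ℂ)).coeff.support = S := by
    ext g
    rw [Finsupp.mem_support_iff, hcoeff]
    split_ifs with hg <;> simp [hg]
  rw [hsNorm, hsupport]
  congr 1
  refine Finset.sum_congr rfl fun g hg => ?_
  rw [hcoeff, if_pos hg, norm_one, one_pow, one_mul]

theorem le_div_sq_mul_of_mul_le_mul_sqrt {N c K B : ℝ} (hN : 0 ≤ N) (hc : 0 < c) (hB : 0 ≤ B)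
    (hle : N * c ≤ K * √(N * B)) : N ≤ (K / c) ^ 2 * B := by
  have hsq : (N * c) ^ 2 ≤ K ^ 2 * (N * B) := by
    simpa [mul_pow, Real.sq_sqrt (mul_nonneg hN hB)] using
      pow_le_pow_left₀ (by positivity) hle 2
  rcases hN.eq_or_lt with rfl | hN
  · positivity
  rw [div_pow, div_mul_eq_mul_div, le_div_iff₀ (by positivity)]
  nlinarith

theorem ncard_isConj_sphere_le_of_trace_bounded {G : Type*} [Group G] (l : G → ℕ) (h : G)
    (τ : MonoidAlgebra ℂ G →ₗ[ℂ] ℂ) (htrace : ∀ a b : MonoidAlgebra ℂ G, τ (a * b) = τ (b * a))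
    (s K : ℝ) (hbound : ∀ f : MonoidAlgebra ℂ G, ‖τ f‖ ≤ K * hsNorm l s f)
    (hc : τ (of ℂ G h) ≠ 0) (n : ℕ) :
    (({x ∈ {x : G | IsConj h x} | l x = n} : Set G).ncard : ℝ) ≤
      (K / ‖τ (of ℂ G h)‖) ^ 2 * (1 + n) ^ (2 * s) := by
  classical
  set T : Set G := {x ∈ {x : G | IsConj h x} | l x = n}
  by_cases hT : T.Finite
  swap
  · rw [Set.Infinite.ncard hT, Nat.cast_zero]
    positivity
  set S := hT.toFinset
  have hτ : τ (∑ x ∈ S, single x 1) = S.card * τ (of ℂ G h) := by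
    rw [map_sum, Finset.sum_congr rfl fun x hx =>
      trace_single_eq_of_isConj τ htrace (hT.mem_toFinset.1 hx).1 1,
      Finset.sum_const, nsmul_eq_mul, of_apply]
  have hnorm : hsNorm l s (∑ x ∈ S, single x 1) = √(S.card * (1 + n) ^ (2 * s)) := by
    rw [hsNorm_sum_single_one, Finset.sum_congr rfl fun x hx => by rw [(hT.mem_toFinset.1 hx).2],
      Finset.sum_const, nsmul_eq_mul]
  rw [Set.ncard_eq_toFinset_card _ hT]
  refine le_div_sq_mul_of_mul_le_mul_sqrt (by positivity) (norm_pos_iff.2 hc) (by positivity) ?_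
  simpa [hτ, hnorm] using hbound (∑ x ∈ S, single x 1)

theorem trace_eq_zero_of_superPolyGrowth_general {G : Type*} [Group G] (l : G → ℕ)
    (h : G)
    (hsuper : SuperPolyGrowth l {x : G | IsConj h x})
    (τ : MonoidAlgebra ℂ G →ₗ[ℂ] ℂ)
    (htrace : ∀ a b : MonoidAlgebra ℂ G, τ (a * b) = τ (b * a))
    (s : ℝ) (K : ℝ)
    (hbound : ∀ f : MonoidAlgebra ℂ G, ‖τ f‖ ≤ K * hsNorm l s f) :
    τ (MonoidAlgebra.of ℂ G h) = 0 := by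
  by_contra hc
  exact hsuper.not_forall_ncard_le _ _
    (ncard_isConj_sphere_le_of_trace_bounded l h τ htrace s K hbound hc)

/-- If the conjugacy class of `h` has superpolynomial growth with respect to a length
function `l`, then any trace `τ` on `ℂ[G]` that is bounded with respect to some `H^s`
norm satisfies `τ(h) = 0`. -/
theorem trace_eq_zero_of_superPolyGrowth {G : Type*} [Group G] (l : G → ℕ)
    (hl : IsLengthFunction l) (h : G)
    (hsuper : SuperPolyGrowth l {x : G | IsConj h x})
    (τ : MonoidAlgebra ℂ G →ₗ[ℂ] ℂ)
    (htrace : ∀ a b : MonoidAlgebra ℂ G, τ (a * b) = τ (b * a))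
    (s : ℝ) (hs : 0 ≤ s) (K : ℝ)
    (hbound : ∀ f : MonoidAlgebra ℂ G, ‖τ f‖ ≤ K * hsNorm l s f) :
    τ (MonoidAlgebra.of ℂ G h) = 0 :=
  trace_eq_zero_of_superPolyGrowth_general l h hsuper τ htrace s K hbound
end

section
/- Let G be a group with a length function l, and let g ∈ G be a torsion element of finite order d > 1 such that for every t with 0 < t < d the conjugacy class of g^t has superpolynomial growth with respect to l. Let τ : ℂ[G] → ℂ be a trace which is bounded with respect to the H^s norm for some s ≥ 0. Then τ(p_g) = τ(1)/d, where p_g is the idempotent associated to g. Consequently, 1 and p_g cannot be distinguished by H^s-bounded traces. -/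
/-!
A trace is constant on conjugacy classes, so if `F` is the set of conjugates of `x` of length `n`,
then `f = ∑_{y ∈ F} y` has `τ f = |F| τ(x)` while `‖f‖_{H^s} = √|F| (1 + n)^s`. Boundedness of `τ`
gives `|F| |τ(x)|² ≤ K² (1 + n)^{2s}`, and superpolynomial growth makes `|F|` exceed any multiple
of `(1 + n)^{2s}`, so `τ(x) = 0`. Applied to the nontrivial powers of `g`, only the term `τ(1)`
survives in `τ(p_g)`.
-/

section

open MonoidAlgebra Finset

section

variable {k G : Type*} [Semiring k]

theorem trace_of_eq_of_isConj {M : Type*} [Group G] (τ : MonoidAlgebra k G → M)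
    (htrace : ∀ a b : MonoidAlgebra k G, τ (a * b) = τ (b * a)) {x y : G} (h : IsConj x y) :
    τ (of k G x) = τ (of k G y) := by
  obtain ⟨u, rfl⟩ := isConj_iff.mp h
  rw [map_mul, map_mul, htrace, ← mul_assoc, ← map_mul, inv_mul_cancel, map_one, one_mul]

theorem coeff_sum_of_apply [MulOneClass G] [DecidableEq G] (F : Finset G) (y : G) :
    (∑ x ∈ F, of k G x).coeff y = if y ∈ F then 1 else 0 := by
  simp only [coeff_sum, Finsupp.finsetSum_apply, of_apply, coeff_single, Finsupp.single_apply,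
    sum_ite_eq']

end

variable {G : Type*} [Group G] {l : G → ℕ} {s K : ℝ}

theorem hsNorm_sum_of_of_length_eq {F : Finset G} {n : ℕ} (hF : ∀ y ∈ F, l y = n) :
    hsNorm l s (∑ y ∈ F, of ℂ G y) = √(#F * (1 + n) ^ (2 * s)) := by
  classical
  have hsupp : (∑ y ∈ F, of ℂ G y).coeff.support = F := by
    ext y
    rw [Finsupp.mem_support_iff, coeff_sum_of_apply]
    by_cases hy : y ∈ F <;> simp [hy]
  rw [hsNorm, hsupp, sum_congr rfl fun y hy => by
    rw [coeff_sum_of_apply, if_pos hy, hF y hy, norm_one, one_pow, one_mul],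
    sum_const, nsmul_eq_mul]

theorem card_mul_sq_norm_trace_of_le (τ : MonoidAlgebra ℂ G →ₗ[ℂ] ℂ)
    (htrace : ∀ a b : MonoidAlgebra ℂ G, τ (a * b) = τ (b * a))
    (hbound : ∀ f : MonoidAlgebra ℂ G, ‖τ f‖ ≤ K * hsNorm l s f) {x : G} {n : ℕ} {F : Finset G}
    (hF : ∀ y ∈ F, IsConj x y ∧ l y = n) :
    #F * ‖τ (of ℂ G x)‖ ^ 2 ≤ K ^ 2 * (1 + n) ^ (2 * s) := by
  have hτF : τ (∑ y ∈ F, of ℂ G y) = #F * τ (of ℂ G x) := by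
    rw [map_sum, sum_congr rfl fun y hy => (trace_of_eq_of_isConj τ htrace (hF y hy).1).symm,
      sum_const, nsmul_eq_mul]
  have h := hbound (∑ y ∈ F, of ℂ G y)
  rw [hτF, hsNorm_sum_of_of_length_eq fun y hy => (hF y hy).2, norm_mul, Complex.norm_natCast] at h
  have hsq := pow_le_pow_left₀ (by positivity) h 2
  rw [mul_pow, mul_pow, Real.sq_sqrt (by positivity)] at hsq
  rcases (#F).eq_zero_or_pos with hF0 | hFpos
  · rw [hF0, Nat.cast_zero, zero_mul]; positivity
  · have : (0 : ℝ) < #F := by exact_mod_cast hFpos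
    nlinarith

theorem trace_of_eq_zero_of_superPolyGrowth (hl : IsLengthFunction l)
    (τ : MonoidAlgebra ℂ G →ₗ[ℂ] ℂ)
    (htrace : ∀ a b : MonoidAlgebra ℂ G, τ (a * b) = τ (b * a))
    (hbound : ∀ f : MonoidAlgebra ℂ G, ‖τ f‖ ≤ K * hsNorm l s f) {x : G}
    (hx : SuperPolyGrowth l {y | IsConj x y}) :
    τ (of ℂ G x) = 0 := by
  set c := ‖τ (of ℂ G x)‖ ^ 2
  have hc : ∀ N : ℕ, N * c ≤ K ^ 2 := by
    intro N
    set m := ⌈2 * s⌉₊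
    obtain ⟨n, hn⟩ := (hx N m).nonempty
    have hfin : {y ∈ {y | IsConj x y} | l y = n}.Finite :=
      (hl.finite_spheres n).subset fun y hy => hy.2
    rw [Set.mem_ofPred_eq, Set.ncard_eq_toFinset_card _ hfin] at hn
    have hF := card_mul_sq_norm_trace_of_le τ htrace hbound (x := x) (n := n)
      (F := hfin.toFinset) fun y hy => by simpa using hy
    have hgrowth : (N : ℝ) * (1 + n) ^ m ≤ #hfin.toFinset := by exact_mod_cast hn.le
    have hpow : (1 + n : ℝ) ^ (2 * s) ≤ (1 + n) ^ m := by
      rw [← Real.rpow_natCast]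
      exact Real.rpow_le_rpow_of_exponent_le (le_add_of_nonneg_right n.cast_nonneg) (Nat.le_ceil _)
    refine le_of_mul_le_mul_right ?_ (by positivity : (0 : ℝ) < (1 + n) ^ m)
    calc N * c * (1 + n) ^ m ≤ #hfin.toFinset * c := by
          rw [mul_right_comm]; exact mul_le_mul_of_nonneg_right hgrowth (by positivity)
      _ ≤ K ^ 2 * (1 + n) ^ (2 * s) := hF
      _ ≤ K ^ 2 * (1 + n) ^ m := by gcongr
  have hc0 : c = 0 := by
    by_contra hne
    have hpos : 0 < c := lt_of_le_of_ne (by positivity) (Ne.symm hne)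
    obtain ⟨N, hN⟩ := exists_nat_gt (K ^ 2 / c)
    exact (hc N).not_gt ((div_lt_iff₀ hpos).mp hN)
  simpa [c] using hc0

end

theorem trace_pIdem_eq_of_superPolyGrowth_general {G : Type*} [Group G] (l : G → ℕ)
    (hl : IsLengthFunction l) (g : G) (d : ℕ) (hd : 1 < d)
    (hsuper : ∀ t : ℕ, 0 < t → t < d → SuperPolyGrowth l {x : G | IsConj (g ^ t) x})
    (τ : MonoidAlgebra ℂ G →ₗ[ℂ] ℂ)
    (htrace : ∀ a b : MonoidAlgebra ℂ G, τ (a * b) = τ (b * a))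
    (s : ℝ) (K : ℝ)
    (hbound : ∀ f : MonoidAlgebra ℂ G, ‖τ f‖ ≤ K * hsNorm l s f) :
    τ (pIdem g d) = τ 1 / d := by
  have hvanish : ∀ t ∈ Finset.range d, t ≠ 0 → τ (MonoidAlgebra.of ℂ G (g ^ t)) = 0 :=
    fun t ht ht0 => trace_of_eq_zero_of_superPolyGrowth hl τ htrace hbound
      (hsuper t (Nat.pos_of_ne_zero ht0) (Finset.mem_range.mp ht))
  rw [pIdem, map_smul, map_sum,
    Finset.sum_eq_single_of_mem 0 (Finset.mem_range.mpr (by omega)) hvanish,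
    pow_zero, map_one, smul_eq_mul, inv_mul_eq_div]

/-- Let `g` be torsion of order `d > 1` such that the conjugacy class of `g^t` has
superpolynomial growth for every `0 < t < d`.  Then any trace `τ` on `ℂ[G]` bounded
with respect to some `H^s` norm satisfies `τ(p_g) = τ(1)/d`; in particular `1` and
`p_g` cannot be distinguished by such traces. -/
theorem trace_pIdem_eq_of_superPolyGrowth {G : Type*} [Group G] (l : G → ℕ)
    (hl : IsLengthFunction l) (g : G) (d : ℕ) (hd : 1 < d) (hg : orderOf g = d)
    (hsuper : ∀ t : ℕ, 0 < t → t < d → SuperPolyGrowth l {x : G | IsConj (g ^ t) x})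
    (τ : MonoidAlgebra ℂ G →ₗ[ℂ] ℂ)
    (htrace : ∀ a b : MonoidAlgebra ℂ G, τ (a * b) = τ (b * a))
    (s : ℝ) (hs : 0 ≤ s) (K : ℝ)
    (hbound : ∀ f : MonoidAlgebra ℂ G, ‖τ f‖ ≤ K * hsNorm l s f) :
    τ (pIdem g d) = τ 1 / d :=
  trace_pIdem_eq_of_superPolyGrowth_general l hl g d hd hsuper τ htrace s K hbound
end

section
/- Let G = (ℤ/3ℤ) ∗ ℤ be the free product of the cyclic group of order 3 (with generator x) and the infinite cyclic group (with generator y). For a natural number m and a function a : Fin m → {1, 2}, define g_a = ∏_{i=0}^{m-1} (y · x^{a(i)} · y · x^{3 - a(i)} · y) ∈ G. Then the map a ↦ g_a · x · g_a⁻¹ from {1,2}^{Fin m} to the conjugacy class of x in G is injective; in particular, the conjugacy class of x contains at least 2^m distinct elements of the form g_a x g_a⁻¹ for each m. -/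
open Monoid

/-- The free product `G = (ℤ/3ℤ) ∗ ℤ`, with `x` the image of a generator of `ℤ/3ℤ`
and `y` the image of a generator of `ℤ`. -/
noncomputable def Gfp : Type := Monoid.Coprod (Multiplicative (ZMod 3)) (Multiplicative ℤ)

noncomputable instance : Group Gfp := by unfold Gfp; infer_instance

/-- `x`: the order-3 torsion generator. -/
noncomputable def xfp : Gfp := Coprod.inl (Multiplicative.ofAdd (1 : ZMod 3))

/-- `y`: the infinite-order generator. -/
noncomputable def yfp : Gfp := Coprod.inr (Multiplicative.ofAdd (1 : ℤ))

/-- For `a : Fin m → Fin 2` (encoding exponents `a(i) + 1 ∈ {1, 2}`), the word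
`g_a = ∏_{i=0}^{m-1} (y · x^{a(i)} · y · x^{3-a(i)} · y)`. -/
noncomputable def gword {m : ℕ} (a : Fin m → Fin 2) : Gfp :=
  (List.ofFn fun i : Fin m =>
    yfp * xfp ^ ((a i : ℕ) + 1) * yfp * xfp ^ (3 - ((a i : ℕ) + 1)) * yfp).prod

/-!
Send `G` to Mathlib's indexed free product `CoprodI`, where every element has a unique reduced
word. There `y (g_a x g_a⁻¹) y⁻¹` is spelled by an explicit reduced word
`y² x^c y x^(3-c) ⋯ y x y⁻¹ ⋯ x^(c-3) y⁻¹ x^(-c) y⁻²` with `c = a 0 + 1`: the outer `y` of each block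
fuses with the `y` of its neighbour into `y²`, so nothing cancels. The second letter of this word
recovers `a 0`, and stripping the outer four letters on each side recovers the word of `Fin.tail a`.
-/

universe u

instance Bool.instGroupCond {G H : Type u} [Group G] [Group H] : ∀ b : Bool, Group (cond b G H)
  | true => ‹Group G›
  | false => ‹Group H›

namespace Monoid.Coprod

variable {G H : Type u} [Group G] [Group H]

def toCoprodI : Coprod G H →* CoprodI (fun b : Bool => cond b G H) :=
  lift (CoprodI.of (M := fun b : Bool => cond b G H) (i := true))
    (CoprodI.of (M := fun b : Bool => cond b G H) (i := false))

theorem toCoprodI_inl (g : G) :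
    toCoprodI (inl g : Coprod G H) = CoprodI.of (M := fun b : Bool => cond b G H) (i := true) g :=
  lift_apply_inl _ _ g

theorem toCoprodI_inr (h : H) :
    toCoprodI (inr h : Coprod G H) = CoprodI.of (M := fun b : Bool => cond b G H) (i := false) h :=
  lift_apply_inr _ _ h

end Monoid.Coprod

namespace Monoid.CoprodI.NeWord

theorem toList_eq_of_prod_eq {ι : Type*} {M : ι → Type*} [∀ i, Monoid (M i)] [DecidableEq ι]
    [∀ i, DecidableEq (M i)] {i j k l : ι} {w : NeWord M i j} {w' : NeWord M k l}
    (h : w.prod = w'.prod) : w.toList = w'.toList :=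
  congrArg Word.toList (Word.equiv.symm.injective h)

end Monoid.CoprodI.NeWord

open CoprodI Multiplicative

noncomputable def gblock (v : Fin 2) : Gfp :=
  yfp * xfp ^ ((v : ℕ) + 1) * yfp * xfp ^ (3 - ((v : ℕ) + 1)) * yfp

theorem gword_succ {m : ℕ} (a : Fin (m + 1) → Fin 2) :
    gword a = gblock (a 0) * gword (Fin.tail a) := by
  rw [gword, List.ofFn_succ, List.prod_cons]
  rfl

theorem gword_conj_succ {m : ℕ} (a : Fin (m + 1) → Fin 2) :
    gword a * xfp * (gword a)⁻¹ =
      gblock (a 0) * (gword (Fin.tail a) * xfp * (gword (Fin.tail a))⁻¹) * (gblock (a 0))⁻¹ := by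
  rw [gword_succ]
  group

abbrev FreeFactor : Bool → Type := fun b => cond b (Multiplicative (ZMod 3)) (Multiplicative ℤ)

noncomputable def Gfp.toCoprodI : Gfp →* CoprodI FreeFactor := Coprod.toCoprodI

theorem Gfp.toCoprodI_xfp :
    Gfp.toCoprodI xfp = of (M := FreeFactor) (i := true) (ofAdd 1 : Multiplicative (ZMod 3)) :=
  Coprod.toCoprodI_inl _

theorem Gfp.toCoprodI_yfp :
    Gfp.toCoprodI yfp = of (M := FreeFactor) (i := false) (ofAdd 1 : Multiplicative ℤ) :=
  Coprod.toCoprodI_inr _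

theorem ofAdd_one_pow_succ_ne_one (v : Fin 2) : (ofAdd (1 : ZMod 3)) ^ ((v : ℕ) + 1) ≠ 1 := by
  revert v
  decide

theorem ofAdd_one_pow_three_sub_ne_one (v : Fin 2) :
    (ofAdd (1 : ZMod 3)) ^ (3 - ((v : ℕ) + 1)) ≠ 1 := by
  revert v
  decide

theorem ofAdd_one_pow_succ_injective :
    Function.Injective fun v : Fin 2 => (ofAdd (1 : ZMod 3)) ^ ((v : ℕ) + 1) := by
  decide

def xLetter (g : Multiplicative (ZMod 3)) (hg : g ≠ 1) : NeWord FreeFactor true true :=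
  .singleton (i := true) g hg

def yLetter (n : ℤ) (hn : n ≠ 0) : NeWord FreeFactor false false :=
  .singleton (i := false) ((ofAdd 1 : Multiplicative ℤ) ^ n)
    fun h => hn (by simpa [← ofAdd_zsmul] using h)

local notation:70 w₁:71 " ⬝ " w₂:70 => NeWord.append w₁ (by decide) w₂

def conjWord : {m : ℕ} → (Fin m → Fin 2) → NeWord FreeFactor false false
  | 0, _ => yLetter 1 one_ne_zero ⬝ xLetter (ofAdd 1) (by decide) ⬝ yLetter (-1) (by decide)
  | _ + 1, a =>
    yLetter 2 two_ne_zero ⬝ xLetter _ (ofAdd_one_pow_succ_ne_one (a 0)) ⬝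
    yLetter 1 one_ne_zero ⬝ xLetter _ (ofAdd_one_pow_three_sub_ne_one (a 0)) ⬝
    conjWord (Fin.tail a) ⬝
    xLetter _ (inv_ne_one.2 (ofAdd_one_pow_three_sub_ne_one (a 0))) ⬝ yLetter (-1) (by decide) ⬝
    xLetter _ (inv_ne_one.2 (ofAdd_one_pow_succ_ne_one (a 0))) ⬝ yLetter (-2) (by decide)

theorem toCoprodI_gword_conj {m : ℕ} (a : Fin m → Fin 2) :
    Gfp.toCoprodI (gword a * xfp * (gword a)⁻¹) =
      (Gfp.toCoprodI yfp)⁻¹ * (conjWord a).prod * Gfp.toCoprodI yfp := by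
  induction m with
  | zero => simp [gword, conjWord, xLetter, yLetter, Gfp.toCoprodI_xfp, Gfp.toCoprodI_yfp]
  | succ m ih =>
    rw [gword_conj_succ, map_mul, map_mul, map_inv, ih]
    simp [gblock, conjWord, xLetter, yLetter, Gfp.toCoprodI_xfp, Gfp.toCoprodI_yfp]
    group

theorem conjWord_toList_injective {m : ℕ} :
    Function.Injective fun a : Fin m → Fin 2 => (conjWord a).toList := by
  induction m with
  | zero => exact fun a b _ => Subsingleton.elim a b
  | succ m ih =>
    intro a b h
    simp only [conjWord, xLetter, yLetter, NeWord.toList, List.cons_append, List.nil_append,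
      List.cons.injEq, Sigma.mk.inj_iff, heq_eq_eq, true_and] at h
    obtain ⟨h_head, -, h_rest⟩ := h
    have h_zero : a 0 = b 0 := ofAdd_one_pow_succ_injective h_head
    rw [h_zero] at h_rest
    have h_tail : Fin.tail a = Fin.tail b := ih (List.append_cancel_right h_rest)
    rw [← Fin.cons_self_tail a, ← Fin.cons_self_tail b, h_zero, h_tail]

theorem injective_gword_conj (m : ℕ) :
    Function.Injective fun a : Fin m → Fin 2 => gword a * xfp * (gword a)⁻¹ := by
  classical
  intro a b hab
  have h := congrArg Gfp.toCoprodI hab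
  simp only [toCoprodI_gword_conj, mul_left_cancel_iff, mul_right_cancel_iff] at h
  exact conjWord_toList_injective (NeWord.toList_eq_of_prod_eq h)

/-- In `G = (ℤ/3ℤ) ∗ ℤ`, the map `a ↦ g_a x g_a⁻¹` on `{1,2}^m` is injective into the
conjugacy class of `x`; in particular that conjugacy class contains at least `2^m`
distinct elements of this form. -/
theorem gword_conj_injective (m : ℕ) :
    Function.Injective (fun a : Fin m → Fin 2 => gword a * xfp * (gword a)⁻¹) ∧
    (∀ a : Fin m → Fin 2, IsConj xfp (gword a * xfp * (gword a)⁻¹)) ∧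
    2 ^ m ≤ Nat.card (Set.range fun a : Fin m → Fin 2 => gword a * xfp * (gword a)⁻¹) := by
  refine ⟨injective_gword_conj m, fun a => isConj_iff.2 ⟨gword a, rfl⟩, ?_⟩
  rw [Nat.card_range_of_injective (injective_gword_conj m)]
  simp
end
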